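/- For the checkerboard-synchronisation IPS on an even-sized grid, from any configuration x with d₁(x) ≤ 1/2 and with both a 1 on some even cell and a 1 on some odd cell, there exists a finite sequence of interactions (diagonal swaps and allowed adjacent swaps) leading to a configuration with strictly more even cells in state 1 and the same total number of 1s. -/

import Mathlib

open scoped Classical

/-- 4-neighbour adjacency on the torus. -/
def adj4 {n₁ n₂ : ℕ} (p q : ZMod n₁ × ZMod n₂) : Prop :=
  q = p + (1, 0) ∨ q = p + (0, 1) ∨ q = p + (-1, 0) ∨ q = p + (0, -1)

/-- Diagonal adjacency on the torus. -/
def diag4 {n₁ n₂ : ℕ} (p q : ZMod n₁ × ZMod n₂) : Prop :=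
  q = p + (1, 1) ∨ q = p + (1, -1) ∨ q = p + (-1, 1) ∨ q = p + (-1, -1)

/-- A cell is isolated if none of its 4-neighbours shares its state. -/
def isolated {n₁ n₂ : ℕ} (x : ZMod n₁ × ZMod n₂ → Bool) (p : ZMod n₁ × ZMod n₂) : Prop :=
  ∀ q : ZMod n₁ × ZMod n₂, adj4 p q → x q ≠ x p

/-- `τ(x,(i,j))`: exchange the states of cells `i` and `j`. -/
def swap {n₁ n₂ : ℕ} (x : ZMod n₁ × ZMod n₂ → Bool) (i j : ZMod n₁ × ZMod n₂) :
    ZMod n₁ × ZMod n₂ → Bool :=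
  fun c => if c = i then x j else if c = j then x i else x c

/-- The checkerboard-synchronisation IPS rule `Φ_C`: on an adjacent pair, swap
iff both cells are non-isolated; on a diagonal pair, always swap. -/
noncomputable def PhiC {n₁ n₂ : ℕ} (x : ZMod n₁ × ZMod n₂ → Bool)
    (i j : ZMod n₁ × ZMod n₂) : ZMod n₁ × ZMod n₂ → Bool :=
  if adj4 i j then
    (if ¬isolated x i ∧ ¬isolated x j then swap x i j else x)
  else if diag4 i j then swap x i j else x

/-- Membership in `C = C_e^0 ∪ C_e^1 ∪ C_o^0 ∪ C_o^1`: some state appears only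
on cells of one parity (a "sub-checkerboard"). -/
def InC {n₁ n₂ : ℕ} (x : ZMod n₁ × ZMod n₂ → Bool) : Prop :=
  (∀ c : ZMod n₁ × ZMod n₂, x c = true → Even (c.1.val + c.2.val)) ∨
  (∀ c : ZMod n₁ × ZMod n₂, x c = true → ¬Even (c.1.val + c.2.val)) ∨
  (∀ c : ZMod n₁ × ZMod n₂, x c = false → Even (c.1.val + c.2.val)) ∨
  (∀ c : ZMod n₁ × ZMod n₂, x c = false → ¬Even (c.1.val + c.2.val))

/-- Number of even cells in state 1. -/
noncomputable def mEven {n₁ n₂ : ℕ} [NeZero n₁] [NeZero n₂]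
    (x : ZMod n₁ × ZMod n₂ → Bool) : ℕ :=
  (Finset.univ.filter
    (fun c : ZMod n₁ × ZMod n₂ => x c = true ∧ Even (c.1.val + c.2.val))).card

/-- Number of cells in state 1. -/
noncomputable def ones {n₁ n₂ : ℕ} [NeZero n₁] [NeZero n₂]
    (x : ZMod n₁ × ZMod n₂ → Bool) : ℕ :=
  (Finset.univ.filter (fun c : ZMod n₁ × ZMod n₂ => x c = true)).card

/-!
Diagonal swaps preserve the parity of a cell, and on an even torus they connect any two cells
of the same parity; conjugating one diagonal swap by others therefore realises every
transposition of two cells of the same parity. Such rearrangements keep the number of even 1s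
and of 1s. Since 1s occupy at most half of the cells, which is exactly the number of cells of
either parity, an odd 1 forces an even 0 and an even 1 forces an odd 0. Rearrange these so
that an even 1 sits at `(0,0)`, an odd 1 at `(1,0)`, an even 0 at `(1,1)` and an odd 0 at
`(0,1)`: then `(1,0)` and `(1,1)` are adjacent and neither is isolated, so the adjacent swap
between them moves the odd 1 to an even cell.
-/

open Finset Relation

variable {n₁ n₂ : ℕ}

lemma fact_one_lt_of_even {n : ℕ} [NeZero n] (h : Even n) : Fact (1 < n) :=
  ⟨Nat.one_lt_of_ne_zero_of_even (NeZero.ne n) h⟩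

section Parity

def parity (c : ZMod n₁ × ZMod n₂) : ZMod 2 := (c.1.val + c.2.val : ℕ)

lemma parity_eq_zero_iff (c : ZMod n₁ × ZMod n₂) :
    parity c = 0 ↔ Even (c.1.val + c.2.val) :=
  ZMod.natCast_eq_zero_iff_even

lemma parity_eq_one_iff (c : ZMod n₁ × ZMod n₂) :
    parity c = 1 ↔ ¬Even (c.1.val + c.2.val) :=
  ZMod.natCast_eq_one_iff_odd.trans Nat.not_even_iff_odd.symm

lemma parity_swap_apply {p q : ZMod n₁ × ZMod n₂} (h : parity p = parity q)
    (c : ZMod n₁ × ZMod n₂) : parity (Equiv.swap p q c) = parity c := by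
  rw [Equiv.swap_apply_def]
  split_ifs with hp hq
  · rw [hp, h]
  · rw [hq, h]
  · rfl

lemma comp_swap_apply_of_parity_ne (z : ZMod n₁ × ZMod n₂ → Bool) {p q c : ZMod n₁ × ZMod n₂}
    (hp : parity c ≠ parity p) (hq : parity c ≠ parity q) : (z ∘ Equiv.swap p q) c = z c :=
  congrArg z (Equiv.swap_apply_of_ne_of_ne (ne_of_apply_ne parity hp) (ne_of_apply_ne parity hq))

lemma parity_one_zero [Fact (1 < n₁)] : parity ((1, 0) : ZMod n₁ × ZMod n₂) = 1 := by
  simp [parity, ZMod.val_one]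

lemma parity_zero_one [Fact (1 < n₂)] : parity ((0, 1) : ZMod n₁ × ZMod n₂) = 1 := by
  simp [parity, ZMod.val_one]

lemma parity_one_one [Fact (1 < n₁)] [Fact (1 < n₂)] :
    parity ((1, 1) : ZMod n₁ × ZMod n₂) = 0 := by
  simp only [parity, ZMod.val_one]
  exact ZMod.natCast_self 2

variable [NeZero n₁] [NeZero n₂]

lemma parity_add (h₁ : Even n₁) (h₂ : Even n₂) (c d : ZMod n₁ × ZMod n₂) :
    parity (c + d) = parity c + parity d := by
  simp only [parity, Nat.cast_add, ZMod.natCast_val, Prod.fst_add, Prod.snd_add,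
    ZMod.cast_add (even_iff_two_dvd.mp h₁), ZMod.cast_add (even_iff_two_dvd.mp h₂)]
  ring

lemma parity_sub_eq_zero (h₁ : Even n₁) (h₂ : Even n₂) {p q : ZMod n₁ × ZMod n₂}
    (h : parity p = parity q) : parity (q - p) = 0 := by
  have := parity_add h₁ h₂ (q - p) p
  rw [sub_add_cancel, h] at this
  exact add_eq_right.mp this.symm

lemma two_mul_card_parity_eq (h₁ : Even n₁) (h₂ : Even n₂) (b : ZMod 2) :
    2 * #{c : ZMod n₁ × ZMod n₂ | parity c = b} = n₁ * n₂ := by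
  have := fact_one_lt_of_even h₁
  have hflip : #{c : ZMod n₁ × ZMod n₂ | parity c = b} =
      #{c : ZMod n₁ × ZMod n₂ | ¬parity c = b} := by
    refine card_equiv (Equiv.addRight ((1, 0) : ZMod n₁ × ZMod n₂)) fun c => ?_
    have hZ2 : ∀ a : ZMod 2, a = b ↔ ¬a + 1 = b := by decide +revert
    simp only [mem_filter, mem_univ, true_and, Equiv.coe_addRight, parity_add h₁ h₂,
      parity_one_zero]
    exact hZ2 _
  have hsum := card_filter_add_card_filter_not (s := (univ : Finset (ZMod n₁ × ZMod n₂)))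
    fun c => parity c = b
  rw [card_univ, Fintype.card_prod, ZMod.card, ZMod.card] at hsum
  omega

lemma exists_false_of_two_mul_ones_le (h₁ : Even n₁) (h₂ : Even n₂)
    {z : ZMod n₁ × ZMod n₂ → Bool} (hd : 2 * ones z ≤ n₁ * n₂) {b : ZMod 2}
    (h : ∃ c, z c = true ∧ parity c ≠ b) : ∃ c, z c = false ∧ parity c = b := by
  by_contra! hall
  obtain ⟨c, hzc, hc⟩ := h
  have hsub : ({c | parity c = b} : Finset (ZMod n₁ × ZMod n₂)) ⊂
      ({c | z c = true} : Finset _) := by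
    refine (ssubset_iff_of_subset fun d hd => ?_).mpr ⟨c, by simpa using hzc, by simpa using hc⟩
    simp only [mem_filter, mem_univ, true_and] at hd ⊢
    exact Bool.not_eq_false _ |>.mp fun hzd => hall d hzd hd
  have := card_lt_card hsub
  have := two_mul_card_parity_eq h₁ h₂ b
  unfold ones at hd
  omega

end Parity

section Interactions

def Interacts (x y : ZMod n₁ × ZMod n₂ → Bool) : Prop :=
  ∃ i j, (adj4 i j ∨ diag4 i j) ∧ PhiC x i j = y

lemma exists_list_of_reflTransGen_interacts {x y : ZMod n₁ × ZMod n₂ → Bool}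
    (h : ReflTransGen Interacts x y) :
    ∃ us : List ((ZMod n₁ × ZMod n₂) × (ZMod n₁ × ZMod n₂)),
      (∀ u ∈ us, adj4 u.1 u.2 ∨ diag4 u.1 u.2) ∧
      us.foldl (fun z u => PhiC z u.1 u.2) x = y := by
  induction h with
  | refl => exact ⟨[], by simp, rfl⟩
  | tail _ hyz ih =>
    obtain ⟨us, hus, rfl⟩ := ih
    obtain ⟨i, j, hij, rfl⟩ := hyz
    refine ⟨us ++ [(i, j)], fun u hu => ?_, by simp⟩
    rcases List.mem_append.mp hu with hu | hu
    · exact hus u hu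
    · rw [List.mem_singleton.mp hu]; exact hij

lemma swap_eq_comp (z : ZMod n₁ × ZMod n₂ → Bool) (i j : ZMod n₁ × ZMod n₂) :
    swap z i j = z ∘ Equiv.swap i j := by
  funext c
  simp only [swap, Function.comp_apply, Equiv.swap_apply_def]
  split_ifs <;> rfl

lemma not_adj4_of_diag4 [Fact (1 < n₁)] [Fact (1 < n₂)] {p q : ZMod n₁ × ZMod n₂}
    (h : diag4 p q) : ¬adj4 p q := by
  rcases h with rfl | rfl | rfl | rfl <;> simp [adj4, Prod.ext_iff]

lemma interacts_comp_swap_of_diag4 [Fact (1 < n₁)] [Fact (1 < n₂)]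
    (z : ZMod n₁ × ZMod n₂ → Bool) {p q : ZMod n₁ × ZMod n₂} (h : diag4 p q) :
    Interacts z (z ∘ Equiv.swap p q) :=
  ⟨p, q, .inr h, by rw [PhiC, if_neg (not_adj4_of_diag4 h), if_pos h, swap_eq_comp]⟩

lemma interacts_comp_swap_of_adj4 {z : ZMod n₁ × ZMod n₂ → Bool} {p q : ZMod n₁ × ZMod n₂}
    (h : adj4 p q) (hp : ¬isolated z p) (hq : ¬isolated z q) :
    Interacts z (z ∘ Equiv.swap p q) :=
  ⟨p, q, .inl h, by rw [PhiC, if_pos h, if_pos ⟨hp, hq⟩, swap_eq_comp]⟩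

end Interactions

def SwapReachable (p q : ZMod n₁ × ZMod n₂) : Prop :=
  ∀ z : ZMod n₁ × ZMod n₂ → Bool, ReflTransGen Interacts z (z ∘ Equiv.swap p q)

namespace SwapReachable

lemma refl (p : ZMod n₁ × ZMod n₂) : SwapReachable p p := by
  intro z
  rw [Equiv.swap_self, Equiv.coe_refl, Function.comp_id]

lemma symm {p q : ZMod n₁ × ZMod n₂} (h : SwapReachable p q) : SwapReachable q p := by
  rw [SwapReachable, Equiv.swap_comm]
  exact h

lemma trans {p q r : ZMod n₁ × ZMod n₂} (hpq : SwapReachable p q) (hqr : SwapReachable q r) :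
    SwapReachable p r := by
  by_cases hrp : r = p
  · exact hrp ▸ refl p
  by_cases hqp : q = p
  · exact hqp ▸ hqr
  by_cases hrq : r = q
  · exact hrq ▸ hpq
  intro z
  have hconj : Equiv.swap p r = Equiv.swap p q * Equiv.swap q r * Equiv.swap p q := by
    rw [Equiv.swap_comm p q, Equiv.swap_comm q r, Equiv.swap_mul_swap_mul_swap hrq hrp]
  rw [hconj, Equiv.Perm.coe_mul, Equiv.Perm.coe_mul]
  exact ((hpq z).trans (hqr _)).trans (hpq _)

lemma of_diag4 [Fact (1 < n₁)] [Fact (1 < n₂)] {p q : ZMod n₁ × ZMod n₂} (h : diag4 p q) :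
    SwapReachable p q :=
  fun z => .single (interacts_comp_swap_of_diag4 z h)

lemma add_zsmul [Fact (1 < n₁)] [Fact (1 < n₂)] {v : ZMod n₁ × ZMod n₂}
    (hv : ∀ p, diag4 p (p + v)) (p : ZMod n₁ × ZMod n₂) (m : ℤ) :
    SwapReachable p (p + m • v) := by
  induction m using Int.induction_on with
  | zero => simpa using refl p
  | succ k ih =>
    rw [add_one_zsmul, ← add_assoc]
    exact ih.trans (of_diag4 (hv _))
  | pred k ih =>
    have hstep := hv (p + (-(k : ℤ) - 1) • v)
    rw [add_assoc, ← add_one_zsmul, sub_add_cancel] at hstep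
    exact ih.trans (of_diag4 hstep).symm

end SwapReachable

lemma exists_eq_zsmul_add_zsmul [NeZero n₁] [NeZero n₂] {δ : ZMod n₁ × ZMod n₂}
    (h : Even (δ.1.val + δ.2.val)) :
    ∃ a b : ℤ, δ = a • ((1, 1) : ZMod n₁ × ZMod n₂) + b • (1, -1) := by
  obtain ⟨k, hk⟩ := h
  refine ⟨k, δ.1.val - k, Prod.ext ?_ ?_⟩
  · simp
  · have hk' := congrArg (Nat.cast : ℕ → ZMod n₂) hk
    push_cast [ZMod.natCast_zmod_val] at hk'
    simp only [Prod.smul_mk, Prod.mk_add_mk, zsmul_eq_mul, mul_one, mul_neg, Int.cast_sub,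
      Int.cast_natCast]
    linear_combination hk'

lemma SwapReachable.of_parity_eq (h₁ : Even n₁) (h₂ : Even n₂) [NeZero n₁] [NeZero n₂]
    {p q : ZMod n₁ × ZMod n₂} (h : parity p = parity q) : SwapReachable p q := by
  have := fact_one_lt_of_even h₁
  have := fact_one_lt_of_even h₂
  obtain ⟨a, b, hab⟩ := exists_eq_zsmul_add_zsmul
    ((parity_eq_zero_iff _).mp (parity_sub_eq_zero h₁ h₂ h))
  rw [← add_sub_cancel p q, hab, ← add_assoc]
  exact (add_zsmul (fun _ => .inl rfl) p a).trans (add_zsmul (fun _ => .inr (.inl rfl)) _ b)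

section Rearranges

variable [NeZero n₁] [NeZero n₂]

def Rearranges (x y : ZMod n₁ × ZMod n₂ → Bool) : Prop :=
  ReflTransGen Interacts x y ∧ mEven y = mEven x ∧ ones y = ones x

lemma Rearranges.trans {x y w : ZMod n₁ × ZMod n₂ → Bool} (hxy : Rearranges x y)
    (hyw : Rearranges y w) : Rearranges x w :=
  ⟨hxy.1.trans hyw.1, hyw.2.1.trans hxy.2.1, hyw.2.2.trans hxy.2.2⟩

lemma mEven_eq_card_parity (z : ZMod n₁ × ZMod n₂ → Bool) :
    mEven z = #{c | z c = true ∧ parity c = 0} := by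
  simp only [mEven, parity_eq_zero_iff]

lemma ones_comp_perm (z : ZMod n₁ × ZMod n₂ → Bool) (σ : Equiv.Perm (ZMod n₁ × ZMod n₂)) :
    ones (z ∘ σ) = ones z :=
  card_equiv σ fun c => by simp

lemma mEven_comp_perm (z : ZMod n₁ × ZMod n₂ → Bool) {σ : Equiv.Perm (ZMod n₁ × ZMod n₂)}
    (hσ : ∀ c, parity (σ c) = parity c) : mEven (z ∘ σ) = mEven z := by
  rw [mEven_eq_card_parity, mEven_eq_card_parity]
  exact card_equiv σ fun c => by simp [hσ]

lemma rearranges_comp_swap (h₁ : Even n₁) (h₂ : Even n₂) (z : ZMod n₁ × ZMod n₂ → Bool)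
    {p q : ZMod n₁ × ZMod n₂} (h : parity p = parity q) :
    Rearranges z (z ∘ Equiv.swap p q) :=
  ⟨SwapReachable.of_parity_eq h₁ h₂ h z, mEven_comp_perm z (parity_swap_apply h),
    ones_comp_perm z _⟩

lemma mEven_comp_swap_of_parity_ne_zero {z : ZMod n₁ × ZMod n₂ → Bool} {p q : ZMod n₁ × ZMod n₂}
    (hp : parity p ≠ 0) (hq : parity q = 0) (hzp : z p = true) (hzq : z q = false) :
    mEven (z ∘ Equiv.swap p q) = mEven z + 1 := by
  have hfilter : ({c | (z ∘ Equiv.swap p q) c = true ∧ parity c = 0} :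
      Finset (ZMod n₁ × ZMod n₂)) =
      insert q ({c | z c = true ∧ parity c = 0} : Finset (ZMod n₁ × ZMod n₂)) := by
    ext c
    simp only [mem_filter, mem_univ, true_and, mem_insert]
    by_cases hcq : c = q
    · simp [hcq, hzp, hq]
    by_cases hc : parity c = 0
    · have hcp : c ≠ p := fun h => hp (h ▸ hc)
      simp [Equiv.swap_apply_of_ne_of_ne hcp hcq, hcq, hc]
    · simp [hc, hcq]
  rw [mEven_eq_card_parity, mEven_eq_card_parity, hfilter, card_insert_of_notMem (by simp [hzq])]

lemma exists_rearranges_one_zero (h₁ : Even n₁) (h₂ : Even n₂) {z : ZMod n₁ × ZMod n₂ → Bool}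
    (hd : 2 * ones z ≤ n₁ * n₂) {b : ZMod 2} {t₁ t₀ : ZMod n₁ × ZMod n₂}
    (ht₁ : parity t₁ = b) (ht₀ : parity t₀ = b) (ht : t₁ ≠ t₀)
    (hb : ∃ c, z c = true ∧ parity c = b) (hb' : ∃ c, z c = true ∧ parity c ≠ b) :
    ∃ y, Rearranges z y ∧ y t₁ = true ∧ y t₀ = false ∧ ∀ c, parity c ≠ b → y c = z c := by
  obtain ⟨c₁, hzc₁, hc₁⟩ := hb
  set y₁ := z ∘ Equiv.swap c₁ t₁
  have hzy₁ := rearranges_comp_swap h₁ h₂ z (hc₁.trans ht₁.symm)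
  have hy₁ : ∀ c, parity c ≠ b → y₁ c = z c := fun c hc =>
    comp_swap_apply_of_parity_ne z (hc₁ ▸ hc) (ht₁ ▸ hc)
  have hy₁t₁ : y₁ t₁ = true := by simp [y₁, hzc₁]
  obtain ⟨c₀, hy₁c₀, hc₀⟩ := exists_false_of_two_mul_ones_le h₁ h₂ (hzy₁.2.2 ▸ hd)
    (hb'.imp fun c hc => ⟨(hy₁ c hc.2).trans hc.1, hc.2⟩)
  have ht₁c₀ : t₁ ≠ c₀ := fun h => by simp [h, hy₁c₀] at hy₁t₁
  refine ⟨y₁ ∘ Equiv.swap c₀ t₀, hzy₁.trans (rearranges_comp_swap h₁ h₂ y₁ (hc₀.trans ht₀.symm)),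
    ?_, by simpa using hy₁c₀, fun c hc => ?_⟩
  · simpa [Equiv.swap_apply_of_ne_of_ne ht₁c₀ ht] using hy₁t₁
  · rw [comp_swap_apply_of_parity_ne y₁ (hc₀ ▸ hc) (ht₀ ▸ hc), hy₁ c hc]

lemma exists_rearranges_corner (h₁ : Even n₁) (h₂ : Even n₂) {x : ZMod n₁ × ZMod n₂ → Bool}
    (hd : 2 * ones x ≤ n₁ * n₂) (he : ∃ c, x c = true ∧ parity c = 0)
    (ho : ∃ c, x c = true ∧ parity c = 1) :
    ∃ w, Rearranges x w ∧
      w (0, 0) = true ∧ w (1, 0) = true ∧ w (1, 1) = false ∧ w (0, 1) = false := by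
  have := fact_one_lt_of_even h₁
  have := fact_one_lt_of_even h₂
  obtain ⟨o, hxo, hpo⟩ := ho
  obtain ⟨y, hxy, hy₀₀, hy₁₁, hy⟩ := exists_rearranges_one_zero h₁ h₂ hd (t₁ := (0, 0))
    (by simp [parity]) parity_one_one (by simp [Prod.ext_iff]) he ⟨o, hxo, hpo ▸ one_ne_zero⟩
  obtain ⟨w, hyw, hw₁₀, hw₀₁, hw⟩ := exists_rearranges_one_zero h₁ h₂ (hxy.2.2 ▸ hd)
    parity_one_zero parity_zero_one (by simp [Prod.ext_iff])
    ⟨o, (hy o (hpo ▸ one_ne_zero)).trans hxo, hpo⟩ ⟨(0, 0), hy₀₀, by simp [parity]⟩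
  exact ⟨w, hxy.trans hyw, (hw _ (by simp [parity])).trans hy₀₀, hw₁₀,
    (hw _ (by simp [parity_one_one])).trans hy₁₁, hw₀₁⟩

end Rearranges

/-- on an even-sized grid, from any configuration `x` with
density of 1s at most 1/2 which has a 1 on some even cell and a 1 on some odd
cell, a finite sequence of `Φ_C`-interactions (adjacent or diagonal pairs)
leads to a configuration with one more even cell in state 1 and the same total
number of 1s. -/
theorem reachability_induction_step
    (n₁ n₂ : ℕ) [NeZero n₁] [NeZero n₂] (h₁ : Even n₁) (h₂ : Even n₂)
    (x : ZMod n₁ × ZMod n₂ → Bool)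
    (hd : 2 * ones x ≤ n₁ * n₂)
    (he : ∃ c : ZMod n₁ × ZMod n₂, x c = true ∧ Even (c.1.val + c.2.val))
    (ho : ∃ c : ZMod n₁ × ZMod n₂, x c = true ∧ ¬Even (c.1.val + c.2.val)) :
    ∃ us : List ((ZMod n₁ × ZMod n₂) × (ZMod n₁ × ZMod n₂)),
      (∀ u ∈ us, adj4 u.1 u.2 ∨ diag4 u.1 u.2) ∧
      mEven (us.foldl (fun z u => PhiC z u.1 u.2) x) = mEven x + 1 ∧
      ones (us.foldl (fun z u => PhiC z u.1 u.2) x) = ones x := by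
  have := fact_one_lt_of_even h₁
  have := fact_one_lt_of_even h₂
  obtain ⟨w, hxw, hw₀₀, hw₁₀, hw₁₁, hw₀₁⟩ := exists_rearranges_corner h₁ h₂ hd
    (he.imp fun c hc => ⟨hc.1, (parity_eq_zero_iff c).mpr hc.2⟩)
    (ho.imp fun c hc => ⟨hc.1, (parity_eq_one_iff c).mpr hc.2⟩)
  have hadj : adj4 ((1, 0) : ZMod n₁ × ZMod n₂) (1, 1) := .inr (.inl (by simp))
  have h₁₀ : ¬isolated w (1, 0) := fun h =>
    h (0, 0) (.inr (.inr (.inl (by simp)))) (hw₀₀.trans hw₁₀.symm)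
  have h₁₁ : ¬isolated w (1, 1) := fun h =>
    h (0, 1) (.inr (.inr (.inl (by simp)))) (hw₀₁.trans hw₁₁.symm)
  obtain ⟨us, hus, hfold⟩ := exists_list_of_reflTransGen_interacts
    (hxw.1.tail (interacts_comp_swap_of_adj4 hadj h₁₀ h₁₁))
  refine ⟨us, hus, ?_, ?_⟩
  · rw [hfold, mEven_comp_swap_of_parity_ne_zero (by simp [parity_one_zero]) parity_one_one
      hw₁₀ hw₁₁, hxw.2.1]
  · rw [hfold, ones_comp_perm, hxw.2.2]
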